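/- Let S be a subring of ℝ, G a subgroup of the positive units of S, and let I be the ideal of S generated by {g - 1 : g ∈ G}, with quotient map π : S → S/I. Let J ⊆ [0,1] be a closed interval with left endpoint η ∈ S, and let g ∈ PL_{S,G}(J). Then for every t ∈ J ∩ S, π(g(t)) = π(t). -/

import Mathlib

/-!
Every slope `g ∈ G` is `≡ 1` modulo `I`, so on a linear piece `f t = g (t - a) + f a` we get
`f t - t ≡ f a - a (mod I)`. Walking through the breakpoints from `f η = η`, the residue of
`f t - t` stays `0`.
-/

/-- An element of PL_{S,G}([η,ζ]): an orientation-preserving piecewise-linear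
homeomorphism of [η,ζ] with finitely many breakpoints, breakpoints (and their
images) in the subring S, and all slopes in the subgroup G of positive units. -/
def PLSGHomeo (S : Subring ℝ) (G : Subgroup ℝˣ) (η ζ : ℝ) (f : ℝ → ℝ) : Prop :=
  f η = η ∧ f ζ = ζ ∧ StrictMonoOn f (Set.Icc η ζ) ∧
  ∃ (n : ℕ) (x : Fin (n + 1) → ℝ), StrictMono x ∧ x 0 = η ∧ x (Fin.last n) = ζ ∧
    (∀ i, x i ∈ S ∧ f (x i) ∈ S) ∧
    ∀ i : Fin n, ∃ g ∈ G, ∀ t ∈ Set.Icc (x i.castSucc) (x i.succ),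
      f t = (g : ℝ) * (t - x i.castSucc) + f (x i.castSucc)

open Ideal.Quotient

theorem Ideal.Quotient.mk_mul_sub_add_eq {R : Type*} [CommRing R] {I : Ideal R} {c a b t : R}
    (hc : c - 1 ∈ I) (hb : mk I b = mk I a) : mk I (c * (t - a) + b) = mk I t := by
  have hc' : mk I c = 1 := by rw [← map_one (mk I)]; exact Ideal.Quotient.eq.mpr hc
  simp [hc', hb]

section

variable {S : Subring ℝ} (I : Ideal S) (f : ℝ → ℝ)

def FixesResidue (t : ℝ) : Prop :=
  ∀ ht : t ∈ S, ∃ hft : f t ∈ S, mk I ⟨f t, hft⟩ = mk I ⟨t, ht⟩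

variable {I f}

theorem fixesResidue_of_eq {t : ℝ} (h : f t = t) : FixesResidue I f t :=
  fun ht => ⟨by rw [h]; exact ht, by congr 1; exact Subtype.ext h⟩

theorem FixesResidue.of_affine {a t : ℝ} (c : S) (hc : c - 1 ∈ I) (ha : a ∈ S)
    (hfa : FixesResidue I f a) (hft : f t = c * (t - a) + f a) : FixesResidue I f t := by
  intro ht
  obtain ⟨hfaS, hres⟩ := hfa ha
  have hftS : f t ∈ S := hft ▸ S.add_mem (S.mul_mem c.2 (S.sub_mem ht ha)) hfaS
  refine ⟨hftS, ?_⟩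
  have hsplit : (⟨f t, hftS⟩ : S) = c * (⟨t, ht⟩ - ⟨a, ha⟩) + ⟨f a, hfaS⟩ := Subtype.ext hft
  rw [hsplit]
  exact mk_mul_sub_add_eq hc hres

theorem fixesResidue_of_piecewise_affine {n : ℕ} {x : Fin (n + 1) → ℝ} (hx : Monotone x)
    (hxS : ∀ i, x i ∈ S) (hf0 : f (x 0) = x 0)
    (hpiece : ∀ i : Fin n, ∃ c : S, c - 1 ∈ I ∧
      ∀ t ∈ Set.Icc (x i.castSucc) (x i.succ), f t = c * (t - x i.castSucc) + f (x i.castSucc))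
    (k : Fin (n + 1)) : ∀ t ∈ Set.Icc (x 0) (x k), FixesResidue I f t := by
  induction k using Fin.induction with
  | zero =>
    intro t ht
    rw [le_antisymm ht.2 ht.1]
    exact fixesResidue_of_eq hf0
  | succ k ih =>
    intro t ht
    rcases le_or_gt t (x k.castSucc) with hle | hlt
    · exact ih t ⟨ht.1, hle⟩
    · obtain ⟨c, hc, hform⟩ := hpiece k
      have hfx := ih (x k.castSucc) ⟨hx (Fin.zero_le _), le_rfl⟩
      exact hfx.of_affine c hc (hxS _) (hform t ⟨hlt.le, ht.2⟩)

end

theorem stmt17_general (S : Subring ℝ) (G : Subgroup ℝˣ)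
    (hG : ∀ g ∈ G, (0 : ℝ) < (g : ℝˣ) ∧ ((g : ℝˣ) : ℝ) ∈ S ∧ (((g⁻¹ : ℝˣ)) : ℝ) ∈ S)
    (I : Ideal S) (hI : I = Ideal.span {s : S | ∃ g ∈ G, (s : ℝ) = ((g : ℝˣ) : ℝ) - 1})
    (η ζ : ℝ)
    (f : ℝ → ℝ) (hf : PLSGHomeo S G η ζ f) :
    ∀ t ∈ Set.Icc η ζ, ∀ ht : t ∈ S,
      ∃ hft : f t ∈ S,
        Ideal.Quotient.mk I ⟨f t, hft⟩ = Ideal.Quotient.mk I ⟨t, ht⟩ := by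
  obtain ⟨hfη, -, -, n, x, hx, hx0, hxl, hxS, hpiece⟩ := hf
  have hslopes : ∀ i : Fin n, ∃ c : S, c - 1 ∈ I ∧ ∀ t ∈ Set.Icc (x i.castSucc) (x i.succ),
      f t = c * (t - x i.castSucc) + f (x i.castSucc) := by
    intro i
    obtain ⟨g, hg, hform⟩ := hpiece i
    refine ⟨⟨g, (hG g hg).2.1⟩, ?_, hform⟩
    rw [hI]
    exact Ideal.subset_span ⟨g, hg, rfl⟩
  intro t ht
  subst hx0 hxl
  exact fixesResidue_of_piecewise_affine hx.monotone (fun i => (hxS i).1) hfη hslopes _ t ht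

/-- Let S be a subring of ℝ, G a subgroup of the positive units of S, and I the
ideal of S generated by {g - 1 : g ∈ G}, with quotient map π : S → S/I. If
J = [η,ζ] ⊆ [0,1] is a closed interval with left endpoint η ∈ S and
f ∈ PL_{S,G}(J), then π(f t) = π(t) for every t ∈ J ∩ S. -/
theorem stmt17 (S : Subring ℝ) (G : Subgroup ℝˣ)
    (hG : ∀ g ∈ G, (0 : ℝ) < (g : ℝˣ) ∧ ((g : ℝˣ) : ℝ) ∈ S ∧ (((g⁻¹ : ℝˣ)) : ℝ) ∈ S)
    (I : Ideal S) (hI : I = Ideal.span {s : S | ∃ g ∈ G, (s : ℝ) = ((g : ℝˣ) : ℝ) - 1})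
    (η ζ : ℝ) (hη : η ∈ S) (hηζ : η ≤ ζ)
    (hsub : Set.Icc η ζ ⊆ Set.Icc (0 : ℝ) 1)
    (f : ℝ → ℝ) (hf : PLSGHomeo S G η ζ f) :
    ∀ t ∈ Set.Icc η ζ, ∀ ht : t ∈ S,
      ∃ hft : f t ∈ S,
        Ideal.Quotient.mk I ⟨f t, hft⟩ = Ideal.Quotient.mk I ⟨t, ht⟩ :=
  stmt17_general S G hG I hI η ζ f hf
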